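/- Let p ≥ 0 be an integer, let Q_p(z) = Σ_{k=0}^{p} a_k z^k with real coefficients a_0,…,a_p, and let μ be a nonnegative Borel measure on ℝ with ∫_ℝ 1/(1+|t|^{p+1}) dμ(t) < ∞. Define H(z) = Im[Q_p(z) + (1/π)∫_ℝ C_p(z,t) dμ(t)] for z = x+iy ∈ C₊. If G is subharmonic on C₊ and G(z) ≤ H(z) for all z ∈ C₊, then sup_{y>0} ∫_ℝ G(x+iy)/[x² + (y+1)²]^{(p+1)/2} dx < ∞. -/

import Mathlib

/-!
Write `z = x + iy`, so that `[x² + (y+1)²]^((p+1)/2) = |z+i|^(p+1)`. Since `G ≤ H` and a Bochner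
integral is at most the Lebesgue integral `∫⁻` of the positive part of its integrand, it suffices
to bound `∫⁻ x, (H(z) / |z+i|^(p+1))⁺` uniformly in `y > 0`; no integrability is needed.
Both parts of `H` are dominated by Poisson kernels: `Im (a_k z^k) ≤ k |a_k| y |z+i|^(p-1)`, and,
since `C_p(z,t) = z^(p+1) / (t^(p+1) (t-z))` for `|t| > 1`,
`Im C_p(z,t) ≤ 2(p+2) |z+i|^(p+1) (y/|t-z|² + y/|z+i|²) / (1 + |t|^(p+1))`.
Each Poisson kernel has `x`-integral `π`, so after Tonelli in `(x, t)` the bound is a constant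
times `∫ dμ(t) / (1 + |t|^(p+1))`.
-/

open MeasureTheory Real ENNReal

/-- The modified Cauchy kernel of order `p` of the upper half plane. -/
noncomputable def modCauchy (p : ℕ) (z : ℂ) (t : ℝ) : ℂ :=
  if |t| ≤ 1 then 1 / (t - z)
  else 1 / (t - z) - ∑ k ∈ Finset.range (p + 1), z ^ k / (t : ℂ) ^ (k + 1)

/-- A function is subharmonic on an open set `Ω ⊆ ℂ` if it is upper semicontinuous on `Ω`
and satisfies the sub-mean value inequality on all sufficiently small circles. -/
def SubharmonicOnC (u : ℂ → ℝ) (Ω : Set ℂ) : Prop :=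
  UpperSemicontinuousOn u Ω ∧
  ∀ a ∈ Ω, ∃ ε > (0 : ℝ), ∀ r : ℝ, 0 < r → r < ε →
    u a ≤ (1 / (2 * π)) * ∫ θ in (0:ℝ)..(2 * π), u (a + r * Complex.exp (θ * Complex.I))

open Complex ProbabilityTheory

section Integrals

variable {α : Type*} [MeasurableSpace α] {μ : Measure α}

theorem ofReal_integral_le_lintegral_ofReal (f : α → ℝ) :
    ENNReal.ofReal (∫ a, f a ∂μ) ≤ ∫⁻ a, ENNReal.ofReal (f a) ∂μ := by
  by_cases hf : Integrable f μ
  · rw [integral_eq_lintegral_pos_part_sub_lintegral_neg_part hf]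
    exact (ENNReal.ofReal_le_ofReal (sub_le_self _ ENNReal.toReal_nonneg)).trans
      ENNReal.ofReal_toReal_le
  · simp [integral_undef hf]

theorem ofReal_im_integral_le_lintegral (f : α → ℂ) :
    ENNReal.ofReal (∫ a, f a ∂μ).im ≤ ∫⁻ a, ENNReal.ofReal (f a).im ∂μ := by
  by_cases hf : Integrable f μ
  · rw [← show ∫ a, (f a).im ∂μ = (∫ a, f a ∂μ).im from integral_im hf]
    exact ofReal_integral_le_lintegral_ofReal _
  · simp [integral_undef hf]

theorem sFinite_of_lintegral_lt_top {f : α → ℝ≥0∞} (hf : Measurable f) (h0 : ∀ a, f a ≠ 0)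
    (htop : ∀ a, f a ≠ ∞) (hμ : ∫⁻ a, f a ∂μ < ∞) : SFinite μ := by
  have := isFiniteMeasure_withDensity hμ.ne
  rw [← withDensity_inv_same (μ := μ) hf (ae_of_all _ h0) (ae_of_all _ htop)]
  infer_instance

end Integrals

theorem lintegral_ofReal_div_sq_add_sq (t : ℝ) {y : ℝ} (hy : 0 < y) :
    ∫⁻ x, ENNReal.ofReal (y / ((x - t) ^ 2 + y ^ 2)) = ENNReal.ofReal π := by
  have h (x : ℝ) : ENNReal.ofReal (y / ((x - t) ^ 2 + y ^ 2))
      = ENNReal.ofReal π * cauchyPDF t y.toNNReal x := by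
    rw [cauchyPDF_def, cauchyPDFReal_def, ← ENNReal.ofReal_mul pi_nonneg,
      Real.coe_toNNReal _ hy.le]
    congr 1
    field_simp
  simp_rw [h]
  rw [lintegral_const_mul _ (measurable_cauchyPDF _ _),
    lintegral_cauchyPDF_eq_one _ (by simpa using hy), mul_one]

theorem lintegral_ofReal_div_sq_add_sq_zero {y : ℝ} (hy : 0 < y) :
    ∫⁻ x, ENNReal.ofReal (y / (x ^ 2 + y ^ 2)) = ENNReal.ofReal π := by
  simpa using lintegral_ofReal_div_sq_add_sq 0 hy

theorem abs_im_mul_le (w v : ℂ) : |(w * v).im| ≤ |w.im| * ‖v‖ + ‖w‖ * |v.im| := by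
  rw [mul_im, add_comm]
  calc |w.im * v.re + w.re * v.im| ≤ |w.im| * |v.re| + |w.re| * |v.im| := by
        simpa only [abs_mul] using abs_add_le (w.im * v.re) (w.re * v.im)
    _ ≤ |w.im| * ‖v‖ + ‖w‖ * |v.im| := by
        gcongr
        · exact abs_re_le_norm v
        · exact abs_re_le_norm w

theorem abs_im_pow_le (z : ℂ) (n : ℕ) : |(z ^ n).im| ≤ n * |z.im| * ‖z‖ ^ (n - 1) := by
  induction n with
  | zero => simp
  | succ n ih =>
    calc |(z ^ (n + 1)).im| ≤ |(z ^ n).im| * ‖z‖ + ‖z ^ n‖ * |z.im| := by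
          rw [pow_succ]; exact abs_im_mul_le _ _
      _ ≤ n * |z.im| * ‖z‖ ^ (n - 1) * ‖z‖ + ‖z‖ ^ n * |z.im| := by
          rw [norm_pow]; gcongr
      _ = (n + 1 : ℕ) * |z.im| * ‖z‖ ^ (n + 1 - 1) := by
          rcases n with _ | n
          · simp
          · push_cast; ring

theorem norm_le_norm_add_I {z : ℂ} (hz : 0 ≤ z.im) : ‖z‖ ≤ ‖z + I‖ := by
  rw [norm_def, norm_def]
  gcongr
  simp only [normSq_apply, add_re, add_im, I_re, I_im, add_zero]
  nlinarith

theorem one_le_norm_add_I {z : ℂ} (hz : 0 ≤ z.im) : 1 ≤ ‖z + I‖ := by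
  calc (1 : ℝ) ≤ |(z + I).im| := by
        rw [add_im, I_im, abs_of_nonneg (by linarith)]; linarith
    _ ≤ ‖z + I‖ := abs_im_le_norm _

theorem im_le_norm_ofReal_sub (z : ℂ) (t : ℝ) : z.im ≤ ‖(t : ℂ) - z‖ := by
  calc z.im ≤ |((t : ℂ) - z).im| := by simp [le_abs_self]
    _ ≤ ‖(t : ℂ) - z‖ := abs_im_le_norm _

theorem inv_sub_sub_sum_div_pow {z T : ℂ} (hT : T ≠ 0) (hTz : T - z ≠ 0) (n : ℕ) :
    1 / (T - z) - ∑ k ∈ Finset.range n, z ^ k / T ^ (k + 1) = z ^ n / (T ^ n * (T - z)) := by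
  induction n with
  | zero => simp
  | succ n ih =>
    rw [Finset.sum_range_succ, ← sub_sub, ih]
    field_simp
    ring

theorem modCauchy_of_one_lt_abs (p : ℕ) {z : ℂ} (hz : 0 < z.im) {t : ℝ} (ht : 1 < |t|) :
    modCauchy p z t = z ^ (p + 1) * ((t : ℂ) - z)⁻¹ / ((t ^ (p + 1) : ℝ) : ℂ) := by
  have hT : (t : ℂ) ≠ 0 := ofReal_ne_zero.2 (by rintro rfl; norm_num at ht)
  have hTz : (t : ℂ) - z ≠ 0 := sub_ne_zero.2 fun h ↦ hz.ne' (by rw [← h, ofReal_im])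
  rw [modCauchy, if_neg ht.not_ge, inv_sub_sub_sum_div_pow hT hTz, Complex.ofReal_pow,
    div_eq_mul_inv, div_eq_mul_inv, mul_inv]
  ring

theorem one_div_mul_le_one_div_sq_add {a b : ℝ} (ha : 0 < a) (hb : 0 < b) :
    1 / (a * b) ≤ 1 / a ^ 2 + 1 / b ^ 2 := by
  rw [div_add_div _ _ (by positivity) (by positivity),
    div_le_div_iff₀ (by positivity) (by positivity)]
  nlinarith [sq_nonneg (a - b), mul_pos ha hb]

section Kernel

variable {z : ℂ} (t : ℝ)

theorem im_inv_ofReal_sub : ((t : ℂ) - z)⁻¹.im = z.im / ‖(t : ℂ) - z‖ ^ 2 := by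
  rw [inv_im, Complex.sq_norm, sub_im, ofReal_im, zero_sub, neg_neg]

theorem abs_im_pow_succ_mul_inv_le (p : ℕ) (hz : 0 < z.im) :
    |(z ^ (p + 1) * ((t : ℂ) - z)⁻¹).im|
      ≤ (p + 2) * (‖z + I‖ ^ (p + 1) * (z.im / ‖(t : ℂ) - z‖ ^ 2 + z.im / ‖z + I‖ ^ 2)) := by
  set R := ‖z + I‖
  set D := ‖(t : ℂ) - z‖
  have hD : 0 < D := hz.trans_le (im_le_norm_ofReal_sub z t)
  have hR : 0 < R := one_pos.trans_le (one_le_norm_add_I hz.le)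
  have hzR : ‖z‖ ≤ R := norm_le_norm_add_I hz.le
  have hinv_im : |((t : ℂ) - z)⁻¹.im| = z.im / D ^ 2 := by
    rw [im_inv_ofReal_sub, abs_of_nonneg (by positivity)]
  have hRD : z.im / (R * D) ≤ z.im / D ^ 2 + z.im / R ^ 2 := by
    have := mul_le_mul_of_nonneg_left (one_div_mul_le_one_div_sq_add hD hR) hz.le
    rw [mul_comm R D]
    simpa [mul_add, div_eq_mul_inv] using this
  calc |(z ^ (p + 1) * ((t : ℂ) - z)⁻¹).im|
      ≤ |(z ^ (p + 1)).im| * D⁻¹ + ‖z‖ ^ (p + 1) * (z.im / D ^ 2) := by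
        have h := abs_im_mul_le (z ^ (p + 1)) ((t : ℂ) - z)⁻¹
        rw [norm_inv, norm_pow, hinv_im] at h
        exact h
    _ ≤ (p + 1) * z.im * R ^ p * D⁻¹ + R ^ (p + 1) * (z.im / D ^ 2) := by
        have := abs_im_pow_le z (p + 1)
        rw [abs_of_pos hz, Nat.add_sub_cancel] at this
        gcongr
        exact this.trans (by push_cast; gcongr)
    _ = R ^ (p + 1) * ((p + 1) * (z.im / (R * D)) + z.im / D ^ 2) := by
        field_simp
        ring
    _ ≤ R ^ (p + 1) *
          ((p + 1) * (z.im / D ^ 2 + z.im / R ^ 2) + (z.im / D ^ 2 + z.im / R ^ 2)) := by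
        gcongr
        exact le_add_of_nonneg_right (by positivity)
    _ = _ := by ring

theorem im_modCauchy_le (p : ℕ) (hz : 0 < z.im) :
    (modCauchy p z t).im ≤ 2 * (p + 2) * (1 / (1 + |t| ^ (p + 1))) *
      (‖z + I‖ ^ (p + 1) * (z.im / ‖(t : ℂ) - z‖ ^ 2 + z.im / ‖z + I‖ ^ 2)) := by
  set B := ‖z + I‖ ^ (p + 1) * (z.im / ‖(t : ℂ) - z‖ ^ 2 + z.im / ‖z + I‖ ^ 2)
  have hB : 0 ≤ B := by positivity
  rcases le_or_gt |t| 1 with ht | ht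
  · have hR : 1 ≤ ‖z + I‖ ^ (p + 1) := one_le_pow₀ (one_le_norm_add_I hz.le)
    have hc : 1 ≤ 2 * (p + 2) * (1 / (1 + |t| ^ (p + 1))) := by
      rw [mul_one_div, one_le_div (by positivity)]
      have : |t| ^ (p + 1) ≤ 1 := pow_le_one₀ (abs_nonneg t) ht
      linarith
    calc (modCauchy p z t).im = z.im / ‖(t : ℂ) - z‖ ^ 2 := by
          rw [modCauchy, if_pos ht, one_div, im_inv_ofReal_sub]
      _ ≤ B := by
          refine le_trans ?_ (le_mul_of_one_le_left (by positivity) hR)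
          exact le_add_of_nonneg_right (by positivity)
      _ ≤ _ := le_mul_of_one_le_left hB hc
  · have ht' : 0 < |t| ^ (p + 1) := by positivity
    rw [modCauchy_of_one_lt_abs p hz ht, div_ofReal_im]
    calc (z ^ (p + 1) * ((t : ℂ) - z)⁻¹).im / t ^ (p + 1)
        ≤ |(z ^ (p + 1) * ((t : ℂ) - z)⁻¹).im| / |t| ^ (p + 1) := by
          rw [← abs_pow, ← abs_div]; exact le_abs_self _
      _ ≤ (p + 2) * B / |t| ^ (p + 1) := by
          gcongr; exact abs_im_pow_succ_mul_inv_le t p hz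
      _ ≤ _ := by
          rw [div_le_iff₀ ht']
          field_simp
          nlinarith [mul_nonneg hB (sub_nonneg.2 (one_le_pow₀ (n := p + 1) ht.le))]

end Kernel

theorem abs_im_pow_le_of_le {z : ℂ} (hz : 0 ≤ z.im) {k p : ℕ} (hk : k ≤ p) :
    |(z ^ k).im| ≤ k * (‖z + I‖ ^ (p + 1) * (z.im / ‖z + I‖ ^ 2)) := by
  set R := ‖z + I‖
  have hR : 1 ≤ R := one_le_norm_add_I hz
  rcases k with _ | m
  · simp
  have hRm : ‖z‖ ^ m ≤ R ^ (p + 1) / R ^ 2 := by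
    rw [le_div_iff₀ (by positivity)]
    calc ‖z‖ ^ m * R ^ 2 ≤ R ^ m * R ^ 2 := by gcongr; exact norm_le_norm_add_I hz
      _ = R ^ (m + 2) := by ring
      _ ≤ R ^ (p + 1) := pow_le_pow_right₀ hR (by omega)
  calc |(z ^ (m + 1)).im| ≤ (m + 1 : ℕ) * |z.im| * ‖z‖ ^ (m + 1 - 1) := abs_im_pow_le z (m + 1)
    _ ≤ (m + 1 : ℕ) * z.im * (R ^ (p + 1) / R ^ 2) := by
        rw [abs_of_nonneg hz, Nat.add_sub_cancel]; gcongr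
    _ = _ := by ring

theorem im_sum_mul_pow_le (p : ℕ) (a : ℕ → ℝ) {z : ℂ} (hz : 0 ≤ z.im) :
    (∑ k ∈ Finset.range (p + 1), (a k : ℂ) * z ^ k).im
      ≤ (∑ k ∈ Finset.range (p + 1), |a k| * k) * (‖z + I‖ ^ (p + 1) * (z.im / ‖z + I‖ ^ 2)) := by
  rw [im_sum, Finset.sum_mul]
  refine Finset.sum_le_sum fun k hk ↦ ?_
  rw [im_ofReal_mul, mul_assoc]
  calc a k * (z ^ k).im ≤ |a k| * |(z ^ k).im| := by rw [← abs_mul]; exact le_abs_self _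
    _ ≤ _ := by
        gcongr
        exact abs_im_pow_le_of_le hz (Finset.mem_range_succ_iff.1 hk)

section HalfPlaneCoordinates

variable (x y : ℝ)

theorem norm_ofReal_sub_sq (t : ℝ) : ‖(t : ℂ) - (x + y * I)‖ ^ 2 = (x - t) ^ 2 + y ^ 2 := by
  rw [Complex.sq_norm, normSq_apply]
  simp
  ring

theorem norm_add_I_sq : ‖(x + y * I : ℂ) + I‖ ^ 2 = x ^ 2 + (y + 1) ^ 2 := by
  rw [Complex.sq_norm, normSq_apply]
  simp
  ring

theorem rpow_eq_norm_add_I_pow (p : ℕ) :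
    (x ^ 2 + (y + 1) ^ 2) ^ (((p : ℝ) + 1) / 2) = ‖(x + y * I : ℂ) + I‖ ^ (p + 1) := by
  rw [← Real.sqrt_sq (norm_nonneg _), norm_add_I_sq, Real.sqrt_eq_rpow,
    ← Real.rpow_mul_natCast (by positivity)]
  push_cast
  ring_nf

end HalfPlaneCoordinates

theorem lintegral_im_modCauchy_div_le (p : ℕ) {y : ℝ} (hy : 0 < y) (t : ℝ) :
    ∫⁻ x : ℝ, ENNReal.ofReal
        ((modCauchy p (x + y * I) t).im / ‖(x + y * I : ℂ) + I‖ ^ (p + 1))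
      ≤ ENNReal.ofReal (4 * (p + 2) * π) * ENNReal.ofReal (1 / (1 + |t| ^ (p + 1))) := by
  set c := 2 * (p + 2) * (1 / (1 + |t| ^ (p + 1)))
  have hc : 0 ≤ c := by positivity
  have hpt (x : ℝ) : (modCauchy p (x + y * I) t).im / ‖(x + y * I : ℂ) + I‖ ^ (p + 1)
      ≤ c * (y / ((x - t) ^ 2 + y ^ 2) + (y + 1) / (x ^ 2 + (y + 1) ^ 2)) := by
    have hz : 0 < ((x : ℂ) + y * I).im := by simpa using hy
    have hR : 0 < ‖(x + y * I : ℂ) + I‖ ^ (p + 1) :=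
      pow_pos (one_pos.trans_le (one_le_norm_add_I hz.le)) _
    have key := im_modCauchy_le t p hz
    rw [show ((x : ℂ) + y * I).im = y by simp, norm_ofReal_sub_sq, norm_add_I_sq] at key
    rw [div_le_iff₀ hR]
    calc _ ≤ c * (‖(x + y * I : ℂ) + I‖ ^ (p + 1) *
          (y / ((x - t) ^ 2 + y ^ 2) + y / (x ^ 2 + (y + 1) ^ 2))) := key
      _ ≤ c * (‖(x + y * I : ℂ) + I‖ ^ (p + 1) *
          (y / ((x - t) ^ 2 + y ^ 2) + (y + 1) / (x ^ 2 + (y + 1) ^ 2))) := by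
        gcongr; linarith
      _ = _ := by ring
  calc _ ≤ ∫⁻ x : ℝ, ENNReal.ofReal c * (ENNReal.ofReal (y / ((x - t) ^ 2 + y ^ 2))
          + ENNReal.ofReal ((y + 1) / (x ^ 2 + (y + 1) ^ 2))) := by
        refine lintegral_mono fun x ↦ ?_
        rw [← ENNReal.ofReal_add (by positivity) (by positivity), ← ENNReal.ofReal_mul hc]
        exact ENNReal.ofReal_le_ofReal (hpt x)
    _ = ENNReal.ofReal c * (ENNReal.ofReal π + ENNReal.ofReal π) := by
        rw [lintegral_const_mul' _ _ ENNReal.ofReal_ne_top, lintegral_add_left (by fun_prop),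
          lintegral_ofReal_div_sq_add_sq t hy, lintegral_ofReal_div_sq_add_sq_zero (by linarith)]
    _ = _ := by
        rw [← ENNReal.ofReal_add pi_nonneg pi_nonneg, ← ENNReal.ofReal_mul hc,
          ← ENNReal.ofReal_mul (by positivity)]
        congr 1
        ring

theorem lintegral_im_sum_mul_pow_div_le (p : ℕ) (a : ℕ → ℝ) {y : ℝ} (hy : 0 < y) :
    ∫⁻ x : ℝ, ENNReal.ofReal
        ((∑ k ∈ Finset.range (p + 1), (a k : ℂ) * (x + y * I) ^ k).im /
          ‖(x + y * I : ℂ) + I‖ ^ (p + 1))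
      ≤ ENNReal.ofReal ((∑ k ∈ Finset.range (p + 1), |a k| * k) * π) := by
  set C := ∑ k ∈ Finset.range (p + 1), |a k| * k
  have hC : 0 ≤ C := by positivity
  have hpt (x : ℝ) : (∑ k ∈ Finset.range (p + 1), (a k : ℂ) * (x + y * I) ^ k).im /
      ‖(x + y * I : ℂ) + I‖ ^ (p + 1) ≤ C * ((y + 1) / (x ^ 2 + (y + 1) ^ 2)) := by
    have hz : 0 ≤ ((x : ℂ) + y * I).im := by simpa using hy.le
    have hR : 0 < ‖(x + y * I : ℂ) + I‖ ^ (p + 1) :=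
      pow_pos (one_pos.trans_le (one_le_norm_add_I hz)) _
    have key := im_sum_mul_pow_le p a hz
    rw [show ((x : ℂ) + y * I).im = y by simp, norm_add_I_sq] at key
    rw [div_le_iff₀ hR]
    calc _ ≤ C * (‖(x + y * I : ℂ) + I‖ ^ (p + 1) * (y / (x ^ 2 + (y + 1) ^ 2))) := key
      _ ≤ C * (‖(x + y * I : ℂ) + I‖ ^ (p + 1) * ((y + 1) / (x ^ 2 + (y + 1) ^ 2))) := by
        gcongr; linarith
      _ = _ := by ring
  calc _ ≤ ∫⁻ x : ℝ, ENNReal.ofReal C * ENNReal.ofReal ((y + 1) / (x ^ 2 + (y + 1) ^ 2)) := by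
        refine lintegral_mono fun x ↦ ?_
        rw [← ENNReal.ofReal_mul hC]
        exact ENNReal.ofReal_le_ofReal (hpt x)
    _ = _ := by
        rw [lintegral_const_mul' _ _ ENNReal.ofReal_ne_top,
          lintegral_ofReal_div_sq_add_sq_zero (by linarith), ENNReal.ofReal_mul hC]

theorem measurable_modCauchy_uncurry (p : ℕ) :
    Measurable (fun q : ℂ × ℝ ↦ modCauchy p q.1 q.2) := by
  unfold modCauchy
  exact Measurable.ite (measurableSet_le (by fun_prop) measurable_const) (by fun_prop) (by fun_prop)

theorem ofReal_div_norm_add_I_pow_le (p : ℕ) (a : ℕ → ℝ) (μ : Measure ℝ) (G : ℂ → ℝ) {z : ℂ}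
    (hz : 0 < z.im)
    (hGz : G z ≤ ((∑ k ∈ Finset.range (p + 1), (a k : ℂ) * z ^ k) +
      (1 / (π : ℂ)) * ∫ t : ℝ, modCauchy p z t ∂μ).im) :
    ENNReal.ofReal (G z / ‖z + I‖ ^ (p + 1))
      ≤ ENNReal.ofReal ((∑ k ∈ Finset.range (p + 1), (a k : ℂ) * z ^ k).im / ‖z + I‖ ^ (p + 1))
        + ENNReal.ofReal π⁻¹ *
          ∫⁻ t, ENNReal.ofReal ((modCauchy p z t).im / ‖z + I‖ ^ (p + 1)) ∂μ := by
  set W := ‖z + I‖ ^ (p + 1)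
  have hW : 0 < W := pow_pos (one_pos.trans_le (one_le_norm_add_I hz.le)) _
  have hG : G z / W ≤ (∑ k ∈ Finset.range (p + 1), (a k : ℂ) * z ^ k).im / W
      + π⁻¹ * (∫ t, modCauchy p z t / (W : ℂ) ∂μ).im := by
    rw [add_im, one_div, ← ofReal_inv, im_ofReal_mul] at hGz
    rw [integral_div, div_ofReal_im, mul_div_assoc', ← add_div]
    exact div_le_div_of_nonneg_right hGz hW.le
  calc _ ≤ _ := ENNReal.ofReal_le_ofReal hG
    _ ≤ _ := ENNReal.ofReal_add_le
    _ ≤ _ := by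
      rw [ENNReal.ofReal_mul (inv_nonneg.2 pi_nonneg)]
      gcongr
      simpa only [div_ofReal_im] using
        ofReal_im_integral_le_lintegral (μ := μ) fun t ↦ modCauchy p z t / (W : ℂ)

theorem lintegral_ofReal_div_rpow_le_of_le_im (p : ℕ) (a : ℕ → ℝ) (μ : Measure ℝ)
    (hμ : ∫⁻ t : ℝ, ENNReal.ofReal (1 / (1 + |t| ^ (p + 1))) ∂μ < ⊤) (G : ℂ → ℝ)
    (hGH : ∀ z : ℂ, 0 < z.im →
      G z ≤ ((∑ k ∈ Finset.range (p + 1), (a k : ℂ) * z ^ k) +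
          (1 / (π : ℂ)) * ∫ t : ℝ, modCauchy p z t ∂μ).im)
    {y : ℝ} (hy : 0 < y) :
    ∫⁻ x : ℝ, ENNReal.ofReal (G (x + y * I) / (x ^ 2 + (y + 1) ^ 2) ^ (((p : ℝ) + 1) / 2))
      ≤ ENNReal.ofReal ((∑ k ∈ Finset.range (p + 1), |a k| * k) * π) + ENNReal.ofReal π⁻¹ *
        (ENNReal.ofReal (4 * (p + 2) * π) * ∫⁻ t, ENNReal.ofReal (1 / (1 + |t| ^ (p + 1))) ∂μ) := by
  have : SFinite μ := sFinite_of_lintegral_lt_top (by fun_prop)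
    (fun (t : ℝ) ↦ (ENNReal.ofReal_pos.2 (by positivity)).ne') (fun _ ↦ ENNReal.ofReal_ne_top) hμ
  have hz (x : ℝ) : 0 < ((x : ℂ) + y * I).im := by simpa using hy
  have hF : AEMeasurable (Function.uncurry fun (x t : ℝ) ↦
      ENNReal.ofReal ((modCauchy p (x + y * I) t).im / ‖(x + y * I : ℂ) + I‖ ^ (p + 1)))
      (volume.prod μ) := by
    have := (measurable_modCauchy_uncurry p).comp
      (f := fun q : ℝ × ℝ ↦ ((q.1 : ℂ) + y * I, q.2)) (by fun_prop)
    exact ((Complex.measurable_im.comp this).div (by fun_prop)).ennreal_ofReal.aemeasurable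
  simp_rw [rpow_eq_norm_add_I_pow]
  calc _ ≤ _ := lintegral_mono fun x ↦
        ofReal_div_norm_add_I_pow_le p a μ G (hz x) (hGH _ (hz x))
    _ = _ := by
      rw [lintegral_add_left (by fun_prop), lintegral_const_mul' _ _ ENNReal.ofReal_ne_top,
        lintegral_lintegral_swap hF]
    _ ≤ _ := by
      gcongr
      · exact lintegral_im_sum_mul_pow_div_le p a hy
      · rw [← lintegral_const_mul' _ _ ENNReal.ofReal_ne_top]
        exact lintegral_mono fun t ↦ lintegral_im_modCauchy_div_le p hy t

theorem stmt_13_general (p : ℕ) (a : ℕ → ℝ) (μ : Measure ℝ)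
    (hμ : ∫⁻ t : ℝ, ENNReal.ofReal (1 / (1 + |t| ^ (p + 1))) ∂μ < ⊤)
    (G : ℂ → ℝ)
    (hGH : ∀ z : ℂ, 0 < z.im →
      G z ≤ ((∑ k ∈ Finset.range (p + 1), (a k : ℂ) * z ^ k) +
          (1 / (π : ℂ)) * ∫ t : ℝ, modCauchy p z t ∂μ).im) :
    ∃ M : ℝ, ∀ y : ℝ, 0 < y →
      (∫ x : ℝ, G (x + y * Complex.I) / (x ^ 2 + (y + 1) ^ 2) ^ (((p : ℝ) + 1) / 2)) ≤ M := by
  refine ⟨(ENNReal.ofReal ((∑ k ∈ Finset.range (p + 1), |a k| * k) * π) + ENNReal.ofReal π⁻¹ *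
    (ENNReal.ofReal (4 * (p + 2) * π) * ∫⁻ t, ENNReal.ofReal (1 / (1 + |t| ^ (p + 1))) ∂μ)).toReal,
    fun y hy ↦ ?_⟩
  rw [← ENNReal.ofReal_le_iff_le_toReal (by finiteness)]
  exact (ofReal_integral_le_lintegral_ofReal _).trans
    (lintegral_ofReal_div_rpow_le_of_le_im p a μ hμ G hGH hy)

/-- If a subharmonic `G` on the upper half plane is dominated by
`H(z) = Im[Q_p(z) + (1/π)∫ C_p(z,t) dμ(t)]`, then
`sup_{y>0} ∫ G(x+iy)/[x²+(y+1)²]^{(p+1)/2} dx < ∞`. -/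
theorem stmt_13 (p : ℕ) (a : ℕ → ℝ) (μ : Measure ℝ)
    (hμ : ∫⁻ t : ℝ, ENNReal.ofReal (1 / (1 + |t| ^ (p + 1))) ∂μ < ⊤)
    (G : ℂ → ℝ) (hG : SubharmonicOnC G {z : ℂ | 0 < z.im})
    (hGH : ∀ z : ℂ, 0 < z.im →
      G z ≤ ((∑ k ∈ Finset.range (p + 1), (a k : ℂ) * z ^ k) +
          (1 / (π : ℂ)) * ∫ t : ℝ, modCauchy p z t ∂μ).im) :
    ∃ M : ℝ, ∀ y : ℝ, 0 < y →
      (∫ x : ℝ, G (x + y * Complex.I) / (x ^ 2 + (y + 1) ^ 2) ^ (((p : ℝ) + 1) / 2)) ≤ M :=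
  stmt_13_general p a μ hμ G hGH
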